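/- Let K be the field of fractions of ℚ[x₀,x₁,x₂,x₃,x₄,x₅], let σ be the ℚ-algebra automorphism of K induced by the permutation of variables x₀↔x₁, x₂↔x₃, x₄↔x₅, and let τ'₁, τ'₂, τ'₃ be the maps on K⁶ defined by: τ'₁ replaces (v₀,v₁) by ((v₂v₄+v₃v₅)/v₁, (v₂v₄+v₃v₅)/v₀); τ'₂ replaces (v₂,v₃) by ((v₁v₄+v₀v₅)/v₃, (v₁v₄+v₀v₅)/v₂); τ'₃ replaces (v₄,v₅) by ((v₀v₂+v₁v₃)/v₅, (v₀v₂+v₁v₃)/v₄); each fixes the remaining entries. Let X = (x₀,…,x₅). Then for every finite word w = (a₁,…,aₙ) with letters in {1,2,3}, the tuple v = τ'₍aₙ₎(⋯(τ'₍a₁₎(X))⋯) satisfies v₁ = σ(v₀), v₃ = σ(v₂), and v₅ = σ(v₄). -/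
import Mathlib


noncomputable section

/-- The polynomial ring ℚ[x₀,…,x₅]. -/
abbrev P : Type := MvPolynomial (Fin 6) ℚ

/-- K = Frac(ℚ[x₀,…,x₅]). -/
abbrev K : Type := FractionRing P

/-- The images of the variables x₀,…,x₅ in K. -/
def x (i : Fin 6) : K := algebraMap P K (MvPolynomial.X i)

/-- τ'₁ : replaces (v₀, v₁) by ((v₂v₄+v₃v₅)/v₁, (v₂v₄+v₃v₅)/v₀). -/
def tau1 (v : Fin 6 → K) : Fin 6 → K := fun k =>
  if k = 0 then (v 2 * v 4 + v 3 * v 5) / v 1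
  else if k = 1 then (v 2 * v 4 + v 3 * v 5) / v 0
  else v k

/-- τ'₂ : replaces (v₂, v₃) by ((v₁v₄+v₀v₅)/v₃, (v₁v₄+v₀v₅)/v₂). -/
def tau2 (v : Fin 6 → K) : Fin 6 → K := fun k =>
  if k = 2 then (v 1 * v 4 + v 0 * v 5) / v 3
  else if k = 3 then (v 1 * v 4 + v 0 * v 5) / v 2
  else v k

/-- τ'₃ : replaces (v₄, v₅) by ((v₀v₂+v₁v₃)/v₅, (v₀v₂+v₁v₃)/v₄). -/
def tau3 (v : Fin 6 → K) : Fin 6 → K := fun k =>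
  if k = 4 then (v 0 * v 2 + v 1 * v 3) / v 5
  else if k = 5 then (v 0 * v 2 + v 1 * v 3) / v 4
  else v k

/-- τ' indexed by Fin 3: `tau i` is τ'_{i+1}. -/
def tau : Fin 3 → (Fin 6 → K) → (Fin 6 → K)
  | 0 => tau1
  | 1 => tau2
  | 2 => tau3

/-- The initial labeled seed X = (x₀,…,x₅). -/
def X0 : Fin 6 → K := x

/-- Apply the maps τ'₍a₁₎, …, τ'₍aₙ₎ along the word `w` in left-to-right order. -/
def applyWord (w : List (Fin 3)) (v : Fin 6 → K) : Fin 6 → K :=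
  w.foldl (fun u a => tau a u) v

/-- A = (x₂x₄+x₃x₅)/(x₀x₁). -/
def A : K := (x 2 * x 4 + x 3 * x 5) / (x 0 * x 1)

/-- B = (x₁x₄+x₀x₅)/(x₂x₃). -/
def B : K := (x 1 * x 4 + x 0 * x 5) / (x 2 * x 3)

/-- C = (x₀x₂+x₁x₃)/(x₄x₅). -/
def C : K := (x 0 * x 2 + x 1 * x 3) / (x 4 * x 5)

/-- The permutation x₀↔x₁, x₂↔x₃, x₄↔x₅ of the variables. -/
def permSigma : Fin 6 ≃ Fin 6 := (Equiv.swap 0 1).trans ((Equiv.swap 2 3).trans (Equiv.swap 4 5))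

/-- The ring homomorphism ℚ[x₀,…,x₅] → K induced by the permutation σ of variables. -/
def sigmaPoly : P →+* K :=
  (algebraMap P K).comp (MvPolynomial.rename permSigma).toRingHom

lemma sigmaPoly_injective : Function.Injective sigmaPoly :=
  (IsFractionRing.injective P K).comp
    (MvPolynomial.rename_injective (R := ℚ) permSigma permSigma.injective)

/-- The ℚ-algebra automorphism σ of K induced by x₀↔x₁, x₂↔x₃, x₄↔x₅ (as a ring
homomorphism K → K; its values determine it as the unique such automorphism). -/
def sigmaK : K →+* K := IsFractionRing.lift sigmaPoly_injective

lemma sigmaK_algebraMap (p : P) :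
    sigmaK (algebraMap P K p) = algebraMap P K (MvPolynomial.rename permSigma p) :=
  IsFractionRing.lift_algebraMap _ _

lemma permSigma_sq (i : Fin 6) : permSigma (permSigma i) = i := by
  fin_cases i <;> decide

lemma sigmaK_x (i : Fin 6) : sigmaK (x i) = x (permSigma i) := by
  rw [x, sigmaK_algebraMap, MvPolynomial.rename_X]; rfl

lemma sigmaK_sigmaK (a : K) : sigmaK (sigmaK a) = a := by
  have h : sigmaK.comp sigmaK = RingHom.id K := by
    apply IsLocalization.ringHom_ext (nonZeroDivisors P)
    apply MvPolynomial.ringHom_ext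
    · intro r
      simp only [RingHom.comp_apply, RingHom.id_apply]
      rw [show ((algebraMap P K) (MvPolynomial.C r)) = algebraMap ℚ K r from
        (IsScalarTower.algebraMap_apply ℚ P K r).symm]
      simp [map_ratCast]
    · intro p
      simp only [RingHom.comp_apply, RingHom.id_apply]
      show sigmaK (sigmaK (x p)) = x p
      rw [sigmaK_x, sigmaK_x, permSigma_sq]
  calc sigmaK (sigmaK a) = (sigmaK.comp sigmaK) a := rfl
    _ = a := by rw [h]; rfl

/-- The antipodal invariant. -/
def AntipInv (v : Fin 6 → K) : Prop :=
  v 1 = sigmaK (v 0) ∧ v 3 = sigmaK (v 2) ∧ v 5 = sigmaK (v 4)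

lemma ainv_X0 : AntipInv X0 := by
  refine ⟨?_, ?_, ?_⟩ <;> rw [X0, sigmaK_x] <;> congr 1 <;> decide

lemma ainv_tau (a : Fin 3) (v : Fin 6 → K) (h : AntipInv v) : AntipInv (tau a v) := by
  obtain ⟨h0, h1, h2⟩ := h
  have s0 : sigmaK (v 0) = v 1 := h0.symm
  have s1 : sigmaK (v 1) = v 0 := by rw [h0, sigmaK_sigmaK]
  have s2 : sigmaK (v 2) = v 3 := h1.symm
  have s3 : sigmaK (v 3) = v 2 := by rw [h1, sigmaK_sigmaK]
  have s4 : sigmaK (v 4) = v 5 := h2.symm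
  have s5 : sigmaK (v 5) = v 4 := by rw [h2, sigmaK_sigmaK]
  fin_cases a <;>
    [ (show AntipInv (tau1 v)); (show AntipInv (tau2 v)); (show AntipInv (tau3 v)) ] <;>
    refine ⟨?_, ?_, ?_⟩ <;>
    simp [tau1, tau2, tau3, map_div₀] <;>
    (try simp only [s0, s1, s2, s3, s4, s5]) <;>
    (try ring)

lemma ainv_applyWord (w : List (Fin 3)) : ∀ v, AntipInv v → AntipInv (applyWord w v) := by
  induction w with
  | nil => intro v h; exact h
  | cons a t ih =>
      intro v h
      exact ih _ (ainv_tau a v h)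

/-- Along any τ-mutation sequence, antipodal entries of the labeled seed are
related by σ: v₁ = σ(v₀), v₃ = σ(v₂), v₅ = σ(v₄). -/
theorem antipodal_sigma (w : List (Fin 3)) :
    applyWord w X0 1 = sigmaK (applyWord w X0 0) ∧
    applyWord w X0 3 = sigmaK (applyWord w X0 2) ∧
    applyWord w X0 5 = sigmaK (applyWord w X0 4) := by
  exact ainv_applyWord w X0 ainv_X0
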